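/- arXiv:1210.1710 — 2 statements merged into one kernel-verified Lean document; each statement's English description precedes it below -/
import Mathlib

section
/- Let θ > 0 and ν > 0 satisfy θ < 2^{-ν}. Let R₀ > 0, C > 0, and let 𝓛 : (R₀, ∞) → ℝ be a non-negative, non-decreasing function such that 𝓛(R) ≤ θ·𝓛(2R) + g(R) for all R > R₀, and 𝓛(R) ≤ C·R^ν for all R > R₀, where g : (R₀, ∞) → ℝ⁺ satisfies g(R) → 0 as R → ∞. Then 𝓛(R) = 0 for all R > R₀. -/
theorem stmt_0 (θ ν R₀ C : ℝ) (hθ : 0 < θ) (hν : 0 < ν)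
    (hθν : θ < 2 ^ (-ν : ℝ)) (hR₀ : 0 < R₀) (hC : 0 < C)
    (L g : ℝ → ℝ)
    (hLnonneg : ∀ R, R₀ < R → 0 ≤ L R)
    (hLmono : ∀ R₁ R₂, R₀ < R₁ → R₁ ≤ R₂ → L R₁ ≤ L R₂)
    (hgnonneg : ∀ R, R₀ < R → 0 ≤ g R)
    (hrec : ∀ R, R₀ < R → L R ≤ θ * L (2 * R) + g R)
    (hgrowth : ∀ R, R₀ < R → L R ≤ C * R ^ (ν : ℝ))
    (hg : Filter.Tendsto g Filter.atTop (nhds 0)) :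
    ∀ R, R₀ < R → L R = 0 := by
  intro R hR
  have h2ν : (0:ℝ) < (2:ℝ) ^ (ν:ℝ) := Real.rpow_pos_of_pos (by norm_num) _
  have hθ1 : θ < 1 := by
    refine lt_of_lt_of_le hθν ?_
    rw [Real.rpow_neg (by norm_num)]
    refine inv_le_one_of_one_le₀ ?_
    exact Real.one_le_rpow (by norm_num) hν.le
  have ha0 : 0 ≤ θ * (2:ℝ)^(ν:ℝ) := by positivity
  have ha : θ * (2:ℝ)^(ν:ℝ) < 1 := by
    have h := (mul_lt_mul_of_pos_right hθν h2ν)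
    rwa [← Real.rpow_add (by norm_num : (0:ℝ) < 2), neg_add_cancel, Real.rpow_zero] at h
  -- it suffices to show L R ≤ ε for all ε > 0
  suffices h : ∀ ε : ℝ, 0 < ε → L R ≤ ε by
    have h0 : L R ≤ 0 := by
      by_contra hcon
      push_neg at hcon
      have := h (L R / 2) (by linarith)
      linarith
    exact le_antisymm h0 (hLnonneg R hR)
  intro ε hε
  have h1θ : 0 < 1 - θ := by linarith
  set ε₁ : ℝ := ε * (1 - θ) / 2 with hε₁def
  have hε₁ : 0 < ε₁ := by positivity
  -- find M with g x ≤ ε₁ for x ≥ M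
  have hev : ∀ᶠ x in Filter.atTop, g x < ε₁ := by
    have := hg.eventually (eventually_lt_nhds hε₁)
    exact this
  obtain ⟨M, hM⟩ := Filter.eventually_atTop.mp hev
  set R' : ℝ := max R M with hR'def
  have hR'R : R ≤ R' := le_max_left _ _
  have hR'M : M ≤ R' := le_max_right _ _
  have hR'0 : R₀ < R' := lt_of_lt_of_le hR hR'R
  have hR'pos : 0 < R' := lt_trans hR₀ hR'0
  -- auxiliary: 2^n * R' > R₀ and ≥ M
  have hpow : ∀ n : ℕ, R' ≤ (2:ℝ)^n * R' := by
    intro n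
    nlinarith [one_le_pow₀ (by norm_num : (1:ℝ) ≤ 2) (n := n), hR'pos]
  have hpowR₀ : ∀ n : ℕ, R₀ < (2:ℝ)^n * R' := fun n => lt_of_lt_of_le hR'0 (hpow n)
  -- main induction
  have hiter : ∀ n : ℕ, L R' ≤ θ^n * L ((2:ℝ)^n * R') +
      ε₁ * (∑ k ∈ Finset.range n, θ^k) := by
    intro n
    induction n with
    | zero => simp
    | succ n ih =>
      have hrecn := hrec ((2:ℝ)^n * R') (hpowR₀ n)
      have hgn : g ((2:ℝ)^n * R') ≤ ε₁ :=
        (hM _ (le_trans hR'M (hpow n))).le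
      have hθn : (0:ℝ) ≤ θ^n := by positivity
      have h2 : (2:ℝ) * ((2:ℝ)^n * R') = (2:ℝ)^(n+1) * R' := by ring
      rw [h2] at hrecn
      have step : θ^n * L ((2:ℝ)^n * R') ≤
          θ^(n+1) * L ((2:ℝ)^(n+1) * R') + θ^n * ε₁ := by
        have := mul_le_mul_of_nonneg_left hrecn hθn
        have hgle : θ^n * g ((2:ℝ)^n * R') ≤ θ^n * ε₁ :=
          mul_le_mul_of_nonneg_left hgn hθn
        calc θ^n * L ((2:ℝ)^n * R')
            ≤ θ^n * (θ * L ((2:ℝ)^(n+1) * R') + g ((2:ℝ)^n * R')) := this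
          _ = θ^(n+1) * L ((2:ℝ)^(n+1) * R') + θ^n * g ((2:ℝ)^n * R') := by ring
          _ ≤ θ^(n+1) * L ((2:ℝ)^(n+1) * R') + θ^n * ε₁ := by linarith
      rw [Finset.sum_range_succ]
      calc L R' ≤ θ^n * L ((2:ℝ)^n * R') + ε₁ * (∑ k ∈ Finset.range n, θ^k) := ih
        _ ≤ θ^(n+1) * L ((2:ℝ)^(n+1) * R') + θ^n * ε₁
              + ε₁ * (∑ k ∈ Finset.range n, θ^k) := by linarith
        _ = θ^(n+1) * L ((2:ℝ)^(n+1) * R')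
              + ε₁ * ((∑ k ∈ Finset.range n, θ^k) + θ^n) := by ring
  -- geometric sum bound
  have hgeom : ∀ n : ℕ, (∑ k ∈ Finset.range n, θ^k) ≤ (1 - θ)⁻¹ := by
    intro n
    rw [geom_sum_eq (by linarith : θ ≠ 1)]
    rw [div_le_iff_of_neg (by linarith : θ - 1 < 0)]
    have hθnn : (0:ℝ) ≤ θ^n := by positivity
    have : (1-θ)⁻¹ * (1-θ) = 1 := inv_mul_cancel₀ (by linarith)
    nlinarith
  -- bound with growth
  have hbound : ∀ n : ℕ, L R' ≤ C * R' ^ (ν:ℝ) * (θ * (2:ℝ)^(ν:ℝ))^n + ε / 2 := by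
    intro n
    have h1 := hiter n
    have h2 : ε₁ * (∑ k ∈ Finset.range n, θ^k) ≤ ε / 2 := by
      calc ε₁ * (∑ k ∈ Finset.range n, θ^k) ≤ ε₁ * (1-θ)⁻¹ :=
            mul_le_mul_of_nonneg_left (hgeom n) hε₁.le
        _ = ε / 2 := by
            rw [hε₁def]
            field_simp
    have hgr := hgrowth ((2:ℝ)^n * R') (hpowR₀ n)
    have hrw : ((2:ℝ)^n * R') ^ (ν:ℝ) = ((2:ℝ)^(ν:ℝ))^n * R' ^ (ν:ℝ) := by
      rw [Real.mul_rpow (by positivity) hR'pos.le]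
      congr 1
      rw [← Real.rpow_natCast (2:ℝ) n, ← Real.rpow_natCast ((2:ℝ)^(ν:ℝ)) n,
        ← Real.rpow_mul (by norm_num), ← Real.rpow_mul (by norm_num), mul_comm]
    have hθn : (0:ℝ) ≤ θ^n := by positivity
    have h3 : θ^n * L ((2:ℝ)^n * R') ≤ C * R' ^ (ν:ℝ) * (θ * (2:ℝ)^(ν:ℝ))^n := by
      calc θ^n * L ((2:ℝ)^n * R') ≤ θ^n * (C * ((2:ℝ)^n * R') ^ (ν:ℝ)) :=
            mul_le_mul_of_nonneg_left hgr hθn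
        _ = C * R' ^ (ν:ℝ) * (θ * (2:ℝ)^(ν:ℝ))^n := by
            rw [hrw, mul_pow]; ring
    linarith
  -- let n → ∞
  have htend : Filter.Tendsto (fun n : ℕ => C * R' ^ (ν:ℝ) * (θ * (2:ℝ)^(ν:ℝ))^n)
      Filter.atTop (nhds 0) := by
    have := tendsto_pow_atTop_nhds_zero_of_lt_one ha0 ha
    simpa using this.const_mul (C * R' ^ (ν:ℝ))
  have hLR' : L R' ≤ ε / 2 := by
    by_contra hcon
    push_neg at hcon
    have hev2 : ∀ᶠ n : ℕ in Filter.atTop,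
        C * R' ^ (ν:ℝ) * (θ * (2:ℝ)^(ν:ℝ))^n < L R' - ε / 2 :=
      htend.eventually (eventually_lt_nhds (by linarith))
    obtain ⟨n, hn⟩ := Filter.eventually_atTop.mp hev2
    have := hbound n
    have := hn n le_rfl
    linarith
  calc L R ≤ L R' := hLmono R R' hR hR'R
    _ ≤ ε / 2 := hLR'
    _ ≤ ε := by linarith
end

section
/- Let 2 < p < 3, q > p − 1, and let M > 0. There exists a constant C = C(q, M) > 0 such that for all real numbers u, v with 0 ≤ v ≤ u ≤ M, one has u^q − v^q ≤ C·v^{q-1}·(u − v) + C·u^{q+1-p}·(u − v)^{p-1}. -/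
open Real

lemma mvt_rpow {q u v : ℝ} (hq : 1 ≤ q) (hv : 0 ≤ v) (hvu : v ≤ u) :
    u ^ q - v ^ q ≤ q * u ^ (q - 1) * (u - v) := by
  rcases eq_or_lt_of_le hvu with rfl | hlt
  · rw [sub_self (v^q), sub_self v, mul_zero]
  have hu : 0 ≤ u := hv.trans hvu
  obtain ⟨c, hc, hceq⟩ := exists_hasDerivAt_eq_slope (fun x => x ^ q)
    (fun x => q * x ^ (q - 1)) hlt
    (Continuous.continuousOn (by
      have : Continuous fun x : ℝ => x ^ q := by
        rw [continuous_iff_continuousAt]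
        intro x
        exact Real.continuousAt_rpow_const x q (Or.inr (by linarith))
      exact this))
    (fun x _ => Real.hasDerivAt_rpow_const (Or.inr hq))
  have hc0 : 0 ≤ c := le_of_lt (lt_of_le_of_lt hv hc.1)
  have hcu : c ≤ u := le_of_lt hc.2
  have hbound : c ^ (q - 1) ≤ u ^ (q - 1) :=
    Real.rpow_le_rpow hc0 hcu (by linarith)
  have huv : 0 ≤ u - v := by linarith
  have hq0 : 0 ≤ q := by linarith
  have : u ^ q - v ^ q = q * c ^ (q - 1) * (u - v) := by
    rw [eq_div_iff (sub_ne_zero.mpr (ne_of_gt hlt) : u - v ≠ 0)] at hceq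
    linarith [hceq]
  rw [this]
  have := mul_le_mul_of_nonneg_left hbound hq0
  nlinarith

theorem stmt_4 (p q M : ℝ) (hp2 : 2 < p) (hp3 : p < 3) (hq : p - 1 < q)
    (hM : 0 < M) :
    ∃ C > (0 : ℝ), ∀ u v : ℝ, 0 ≤ v → v ≤ u → u ≤ M →
      u ^ q - v ^ q ≤ C * v ^ (q - 1) * (u - v) +
        C * u ^ (q + 1 - p) * (u - v) ^ (p - 1) := by
  have hq1 : 1 ≤ q := by linarith
  refine ⟨q * 2 ^ (q - 1) + 2 ^ (p - 1), by positivity, fun u v hv hvu hum => ?_⟩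
  have hu : 0 ≤ u := hv.trans hvu
  have huv : 0 ≤ u - v := by linarith
  set C := q * 2 ^ (q - 1) + 2 ^ (p - 1) with hC
  have hCpos : (0:ℝ) < C := by positivity
  rcases le_or_gt u (2 * v) with h | h
  · -- u ≤ 2v : use first term
    have h1 : u ^ q - v ^ q ≤ q * u ^ (q - 1) * (u - v) := mvt_rpow hq1 hv hvu
    have h2 : u ^ (q - 1) ≤ 2 ^ (q - 1) * v ^ (q - 1) := by
      calc u ^ (q - 1) ≤ (2 * v) ^ (q - 1) :=
            Real.rpow_le_rpow hu h (by linarith)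
        _ = 2 ^ (q - 1) * v ^ (q - 1) := Real.mul_rpow (by norm_num) hv
    have hterm2 : 0 ≤ C * u ^ (q + 1 - p) * (u - v) ^ (p - 1) := by positivity
    have : q * u ^ (q - 1) * (u - v) ≤ q * 2 ^ (q - 1) * v ^ (q - 1) * (u - v) := by
      have := mul_le_mul_of_nonneg_left h2 (by linarith : (0:ℝ) ≤ q)
      nlinarith
    have hCle : q * 2 ^ (q-1) * v ^ (q-1) * (u-v) ≤ C * v ^ (q-1) * (u-v) := by
      have key : (0:ℝ) ≤ 2 ^ (p-1) * v ^ (q-1) * (u-v) := by positivity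
      rw [hC]; nlinarith [key]
    linarith
  · -- 2v < u : use second term
    have huv2 : u ≤ 2 * (u - v) := by linarith
    have h1 : u ^ q - v ^ q ≤ u ^ q := by
      have : (0:ℝ) ≤ v ^ q := Real.rpow_nonneg hv _
      linarith
    have hsplit : u ^ q = u ^ (q + 1 - p) * u ^ (p - 1) := by
      rw [← Real.rpow_add' hu (by ring_nf; linarith)]
      ring_nf
    have h2 : u ^ (p - 1) ≤ 2 ^ (p - 1) * (u - v) ^ (p - 1) := by
      calc u ^ (p - 1) ≤ (2 * (u - v)) ^ (p - 1) :=
            Real.rpow_le_rpow hu huv2 (by linarith)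
        _ = 2 ^ (p - 1) * (u - v) ^ (p - 1) := Real.mul_rpow (by norm_num) huv
    have hterm1 : 0 ≤ C * v ^ (q - 1) * (u - v) := by positivity
    have hup : (0:ℝ) ≤ u ^ (q + 1 - p) := Real.rpow_nonneg hu _
    have h3 : u ^ q ≤ 2 ^ (p-1) * u ^ (q + 1 - p) * (u - v) ^ (p - 1) := by
      rw [hsplit]
      have := mul_le_mul_of_nonneg_left h2 hup
      nlinarith
    have hCle : 2 ^ (p-1) * u ^ (q+1-p) * (u-v) ^ (p-1) ≤ C * u ^ (q+1-p) * (u-v) ^ (p-1) := by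
      have key : (0:ℝ) ≤ q * 2 ^ (q-1) * u ^ (q+1-p) * (u-v) ^ (p-1) := by
        positivity
      rw [hC]; nlinarith [key]
    linarith
end
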